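/- arXiv:2405.19516 — 2 statements merged into one kernel-verified Lean document; each statement's English description precedes it below -/
import Mathlib

section
/- Let r, v, t, ω, θ_v, θ_n, R be real numbers with r ≥ 0 and v·t ≥ 0, and set A = R − r·cos(ωt − θ_n) − v·t·cos(θ_v − θ_n). Assume A > 0. Let p = (r·cos(ωt) + v·t·cos θ_v, r·sin(ωt) + v·t·sin θ_v) and q = (R·cos θ_n, R·sin θ_n) in ℝ². Then A ≤ ‖p − q‖ ≤ A + (r + v·t)²/(2A). -/
/-!
In coordinates rotated by `-θ_n`, the vector `p - q` has radial component `-A` and tangential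
component `X = r sin (ωt - θ_n) + vt sin (θ_v - θ_n)`, so `‖p - q‖ = √(A² + X²)` with
`|X| ≤ r + vt`. Both bounds then follow from `A ≤ √(A² + b) ≤ A + b / (2A)` for `b ≥ 0`.
-/

open Real

lemma EuclideanSpace.norm_sub_fin_two (a b c d : ℝ) :
    ‖!₂[a, b] - !₂[c, d]‖ = √((a - c) ^ 2 + (b - d) ^ 2) := by
  simp [EuclideanSpace.norm_eq, Fin.sum_univ_two]

lemma sq_add_sq_eq_rotate (x y θ : ℝ) :
    x ^ 2 + y ^ 2 = (x * cos θ + y * sin θ) ^ 2 + (y * cos θ - x * sin θ) ^ 2 := by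
  linear_combination -(x ^ 2 + y ^ 2) * sin_sq_add_cos_sq θ

lemma abs_mul_sin_add_mul_sin_le {a b : ℝ} (ha : 0 ≤ a) (hb : 0 ≤ b) (x y : ℝ) :
    |a * sin x + b * sin y| ≤ a + b :=
  calc |a * sin x + b * sin y| ≤ |a * sin x| + |b * sin y| := abs_add_le _ _
    _ = a * |sin x| + b * |sin y| := by rw [abs_mul, abs_mul, abs_of_nonneg ha, abs_of_nonneg hb]
    _ ≤ a * 1 + b * 1 := by gcongr <;> exact abs_sin_le_one _
    _ = a + b := by ring

lemma le_sqrt_sq_add (a : ℝ) {b : ℝ} (hb : 0 ≤ b) : a ≤ √(a ^ 2 + b) :=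
  (le_abs_self a).trans (abs_le_sqrt (by linarith))

lemma sqrt_sq_add_le {a b : ℝ} (ha : 0 < a) (hb : 0 ≤ b) : √(a ^ 2 + b) ≤ a + b / (2 * a) := by
  rw [sqrt_le_left (by positivity)]
  have hsq : (a + b / (2 * a)) ^ 2 = a ^ 2 + b + (b / (2 * a)) ^ 2 := by
    field_simp
    ring
  nlinarith [sq_nonneg (b / (2 * a))]

theorem stmt_6 (r v t ω θ_v θ_n R : ℝ) (hr : r ≥ 0) (hvt : v * t ≥ 0)
    (A : ℝ)
    (hA : A = R - r * Real.cos (ω * t - θ_n) - v * t * Real.cos (θ_v - θ_n))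
    (hApos : A > 0) :
    let p : EuclideanSpace ℝ (Fin 2) :=
      !₂[r * Real.cos (ω * t) + v * t * Real.cos θ_v,
        r * Real.sin (ω * t) + v * t * Real.sin θ_v]
    let q : EuclideanSpace ℝ (Fin 2) := !₂[R * Real.cos θ_n, R * Real.sin θ_n]
    A ≤ ‖p - q‖ ∧ ‖p - q‖ ≤ A + (r + v * t) ^ 2 / (2 * A) := by
  intro p q
  set X := r * sin (ω * t - θ_n) + v * t * sin (θ_v - θ_n) with hX_def
  have hradial : (r * cos (ω * t) + v * t * cos θ_v - R * cos θ_n) * cos θ_n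
      + (r * sin (ω * t) + v * t * sin θ_v - R * sin θ_n) * sin θ_n = -A := by
    rw [hA, cos_sub, cos_sub]
    linear_combination (-R) * sin_sq_add_cos_sq θ_n
  have htangential : (r * sin (ω * t) + v * t * sin θ_v - R * sin θ_n) * cos θ_n
      - (r * cos (ω * t) + v * t * cos θ_v - R * cos θ_n) * sin θ_n = X := by
    rw [hX_def, sin_sub, sin_sub]
    ring
  have hnorm : ‖p - q‖ = √(A ^ 2 + X ^ 2) := by
    rw [EuclideanSpace.norm_sub_fin_two, sq_add_sq_eq_rotate _ _ θ_n, hradial, htangential, neg_sq]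
  have hX : X ^ 2 ≤ (r + v * t) ^ 2 := by
    have hX_abs := abs_le.mp (abs_mul_sin_add_mul_sin_le hr hvt (ω * t - θ_n) (θ_v - θ_n))
    exact sq_le_sq' hX_abs.1 hX_abs.2
  rw [hnorm]
  refine ⟨le_sqrt_sq_add A (sq_nonneg X), (sqrt_sq_add_le hApos (sq_nonneg X)).trans ?_⟩
  gcongr
end

section
/- Let A and T be finite index sets, S : A × T → ℂ, h : A → ℝ, τ : T → ℝ, and let κ, r, ω, φ, θ_d, v₁, v₂ be real numbers. Let d = (cos φ·cos θ_d, cos φ·sin θ_d, sin φ) ∈ ℝ³, and for a ∈ A, t ∈ T let p(a,t) = (r·cos(ω·τ(t)), r·sin(ω·τ(t)), h(a)) ∈ ℝ³ and v = (v₁, v₂, 0) ∈ ℝ³. Then ∑_{a∈A} ∑_{t∈T} S(a,t)·exp(i·κ·⟪d, p(a,t) + τ(t)·v⟫) = ∑_{t∈T} (∑_{a∈A} S(a,t)·exp(i·κ·h(a)·sin φ)) · exp(i·κ·⟪d′, p′(t) + τ(t)·v′⟫), where d′ = (cos φ·cos θ_d, cos φ·sin θ_d) ∈ ℝ², p′(t)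 = (r·cos(ω·τ(t)), r·sin(ω·τ(t))) ∈ ℝ², v′ = (v₁, v₂) ∈ ℝ², and ⟪·,·⟫ denotes the Euclidean inner product. -/
/-! Only the third coordinate of the look direction sees the antenna height, and the platform
velocity has no vertical component, so the phase `κ ⟪d, p + τ v⟫` splits as an elevation term
depending on the antenna alone plus an azimuth term depending on the time sample alone.
The exponential turns this sum into a product, and the double sum factors. -/

open RealInnerProductSpace

theorem EuclideanSpace.inner_vec3_add_smul_horizontal (a b c x y z u w s : ℝ) :
    ⟪!₂[a, b, c], !₂[x, y, z] + s • !₂[u, w, 0]⟫ =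
      c * z + ⟪!₂[a, b], !₂[x, y] + s • !₂[u, w]⟫ := by
  simp only [PiLp.inner_apply, Fin.sum_univ_three, Fin.sum_univ_two, PiLp.add_apply,
    PiLp.smul_apply, smul_eq_mul, RCLike.inner_apply, conj_trivial, Matrix.cons_val_zero,
    Matrix.cons_val_one, Matrix.cons_val, Matrix.cons_val_fin_one, mul_zero, add_zero]
  ring

theorem Finset.sum_sum_mul_exp_add {A T : Type*} [Fintype A] [Fintype T]
    (S : A × T → ℂ) (x : A → ℂ) (y : T → ℂ) :
    ∑ a, ∑ t, S (a, t) * Complex.exp (x a + y t) =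
      ∑ t, (∑ a, S (a, t) * Complex.exp (x a)) * Complex.exp (y t) := by
  rw [Finset.sum_comm]
  simp only [Finset.sum_mul, Complex.exp_add, mul_assoc]

theorem stmt_13 (A T : Type*) [Fintype A] [Fintype T]
    (S : A × T → ℂ) (h : A → ℝ) (τ : T → ℝ)
    (κ r ω φ θ_d v₁ v₂ : ℝ) :
    let d : EuclideanSpace ℝ (Fin 3) :=
      !₂[Real.cos φ * Real.cos θ_d, Real.cos φ * Real.sin θ_d, Real.sin φ]
    let p : A → T → EuclideanSpace ℝ (Fin 3) := fun a t =>
      !₂[r * Real.cos (ω * τ t), r * Real.sin (ω * τ t), h a]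
    let v : EuclideanSpace ℝ (Fin 3) := !₂[v₁, v₂, 0]
    let d' : EuclideanSpace ℝ (Fin 2) :=
      !₂[Real.cos φ * Real.cos θ_d, Real.cos φ * Real.sin θ_d]
    let p' : T → EuclideanSpace ℝ (Fin 2) := fun t =>
      !₂[r * Real.cos (ω * τ t), r * Real.sin (ω * τ t)]
    let v' : EuclideanSpace ℝ (Fin 2) := !₂[v₁, v₂]
    ∑ a : A, ∑ t : T,
        S (a, t) * Complex.exp (Complex.I * κ * ⟪d, p a t + τ t • v⟫) =
      ∑ t : T,
        (∑ a : A, S (a, t) * Complex.exp (Complex.I * κ * (h a * Real.sin φ))) *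
          Complex.exp (Complex.I * κ * ⟪d', p' t + τ t • v'⟫) := by
  intro d p v d' p' v'
  simp only [d, p, v, d', p', v', EuclideanSpace.inner_vec3_add_smul_horizontal,
    mul_comm (Real.sin φ), Complex.ofReal_add, Complex.ofReal_mul, mul_add]
  exact Finset.sum_sum_mul_exp_add S _ _
end
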